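/- Let θ be inner and g ∈ L^∞(T) with ker A_g^θ ≠ {0}, and let n be the greatest natural number such that ker A_g^θ ⊆ zⁿH². Then (1/zⁿ)·ker A_g^θ is a nearly S*-invariant subspace of H². -/

import Mathlib

open MeasureTheory Complex Real
open scoped ENNReal ComplexConjugate

noncomputable section

namespace Paper

instance : Fact (0 < 2 * Real.pi) := ⟨by positivity⟩

abbrev Tc : Type := AddCircle (2 * Real.pi)
abbrev μ0 : MeasureTheory.Measure Tc := AddCircle.haarAddCircle
abbrev L2 : Type := MeasureTheory.Lp ℂ 2 μ0

def coeffCLM (n : ℤ) : L2 →L[ℂ] ℂ :=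
  LinearMap.mkContinuous
    { toFun := fun f => fourierBasis.repr f n
      map_add' := fun f g => by simp
      map_smul' := fun c f => by simp }
    1
    (fun f => by
      have h := lp.norm_apply_le_norm (p := 2) (by norm_num) (fourierBasis.repr f) n
      simpa using h)

def cf (f : L2) (n : ℤ) : ℂ := coeffCLM n f

/-- The subspace of `L²(𝕋)` of functions whose Fourier coefficients of index `< k` vanish.
Thus `coeffGE 0 = H²` and `coeffGE k = zᵏH²` for `k ≥ 0`. -/
def coeffGE (k : ℤ) : Submodule ℂ L2 :=
  ⨅ (n : ℤ) (_ : n < k), LinearMap.ker (coeffCLM n : L2 →ₗ[ℂ] ℂ)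

/-- The subspace of `L²(𝕋)` of functions whose Fourier coefficients of index `≥ k` vanish.
Thus `coeffLT 0 = conj (H²₀) = (H²)^⊥`. -/
def coeffLT (k : ℤ) : Submodule ℂ L2 :=
  ⨅ (n : ℤ) (_ : k ≤ n), LinearMap.ker (coeffCLM n : L2 →ₗ[ℂ] ℂ)

/-- The Hardy space `H²` of the unit disc, viewed as a subspace of `L²(𝕋)`. -/
def H2 : Submodule ℂ L2 := coeffGE 0

lemma mem_coeffGE {k : ℤ} {f : L2} : f ∈ coeffGE k ↔ ∀ n < k, cf f n = 0 := by
  simp [coeffGE, cf, Submodule.mem_iInf, LinearMap.mem_ker]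

lemma isClosed_coeffGE (k : ℤ) : IsClosed ((coeffGE k : Submodule ℂ L2) : Set L2) := by
  have h : ((coeffGE k : Submodule ℂ L2) : Set L2)
      = ⋂ (n : ℤ) (_ : n < k), (LinearMap.ker (coeffCLM n : L2 →ₗ[ℂ] ℂ) : Set L2) := by
    ext f
    simp [coeffGE, Submodule.mem_iInf, Set.mem_iInter]
  rw [h]
  exact isClosed_iInter fun n => isClosed_iInter fun _ => ContinuousLinearMap.isClosed_ker (coeffCLM n)

end Paper
namespace Paper

open scoped Classical in
/-- Multiplication by an `L^∞` function, as a linear map on `L²(𝕋)` (defined to be `0` if the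
symbol is not essentially bounded). -/
def mulLM (g : Tc → ℂ) : L2 →ₗ[ℂ] L2 :=
  if hg : MemLp g ⊤ μ0 then
    { toFun := fun f => ((Lp.memLp f).smul (r := 2) hg).toLp (g • ⇑f)
      map_add' := fun f₁ f₂ => by
        apply Lp.ext
        filter_upwards [MemLp.coeFn_toLp ((Lp.memLp (f₁ + f₂)).smul (r := 2) hg),
          MemLp.coeFn_toLp ((Lp.memLp f₁).smul (r := 2) hg),
          MemLp.coeFn_toLp ((Lp.memLp f₂).smul (r := 2) hg),
          Lp.coeFn_add f₁ f₂,
          Lp.coeFn_add (((Lp.memLp f₁).smul (r := 2) hg).toLp (g • ⇑f₁))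
            (((Lp.memLp f₂).smul (r := 2) hg).toLp (g • ⇑f₂))] with x h0 h1 h2 h3 h4
        rw [h0, h4, Pi.add_apply, h1, h2]
        simp only [Pi.smul_apply', Pi.add_apply, h3, smul_add]
      map_smul' := fun c f => by
        apply Lp.ext
        filter_upwards [MemLp.coeFn_toLp ((Lp.memLp (c • f)).smul (r := 2) hg),
          MemLp.coeFn_toLp ((Lp.memLp f).smul (r := 2) hg),
          Lp.coeFn_smul c f,
          Lp.coeFn_smul c (((Lp.memLp f).smul (r := 2) hg).toLp (g • ⇑f))] with x h0 h1 h3 h4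
        simp only [RingHom.id_apply]
        rw [h0, h4, Pi.smul_apply, h1]
        simp only [Pi.smul_apply', Pi.smul_apply, h3]
        exact smul_comm _ _ _ }
  else 0

end Paper
namespace Paper

/-- The orthogonal projection of `L²(𝕋)` onto a closed subspace, as a map `L² → L²`. -/
def projCLM (U : Submodule ℂ L2) (hU : IsClosed (U : Set L2)) : L2 →L[ℂ] L2 :=
  letI : CompleteSpace U := hU.completeSpace_coe
  U.subtypeL.comp U.orthogonalProjectionOnto

/-- The subspace `θH²` of `L²(𝕋)`. -/
def thetaH2 (θ : Tc → ℂ) : Submodule ℂ L2 := H2.map (mulLM θ)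

/-- The model space `K_θ = H² ⊖ θH²`. -/
def Kmod (θ : Tc → ℂ) : Submodule ℂ L2 := H2 ⊓ (thetaH2 θ)ᗮ

lemma isClosed_Kmod (θ : Tc → ℂ) : IsClosed ((Kmod θ : Submodule ℂ L2) : Set L2) :=
  (isClosed_coeffGE 0).inter (thetaH2 θ).isClosed_orthogonal

/-- The orthogonal projection `P_θ : L² → K_θ` (composed with the inclusion back into `L²`). -/
def Ptheta (θ : Tc → ℂ) : L2 →L[ℂ] L2 := projCLM (Kmod θ) (isClosed_Kmod θ)

/-- The orthogonal projection `P₊ : L² → H²`. -/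
def Pplus : L2 →L[ℂ] L2 := projCLM H2 (isClosed_coeffGE 0)

/-- The independent variable `z = e^{it}`, as a function on the circle. -/
def zf : Tc → ℂ := fun x => fourier 1 x

/-- The conjugate variable `z̄ = e^{-it}`. -/
def zbar : Tc → ℂ := fun x => fourier (-1) x

lemma memLp_fourier (n : ℤ) : MemLp (fun x : Tc => (fourier n x : ℂ)) ⊤ μ0 := by
  refine memLp_top_of_bound ((fourier n).continuous.aestronglyMeasurable) 1 ?_
  exact Filter.Eventually.of_forall fun x => le_of_eq (Circle.norm_coe _)

lemma memLp_zf : MemLp zf ⊤ μ0 := memLp_fourier 1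

lemma memLp_zbar : MemLp zbar ⊤ μ0 := memLp_fourier (-1)

/-- The backward shift `S* : f ↦ (f - f(0))/z`, realised on `L²(𝕋)` as
`f ↦ P₊(z̄ f)`; on `H²` this is the usual backward shift. -/
def Sstar : L2 →ₗ[ℂ] L2 := (Pplus : L2 →ₗ[ℂ] L2).comp (mulLM zbar)

/-- `θ` is an inner function: it is essentially bounded, unimodular a.e. on the circle, and
all its negative Fourier coefficients vanish (i.e. it is the boundary function of a bounded
analytic function on the disc). -/
structure IsInner (θ : Tc → ℂ) : Prop where
  memLinf : MemLp θ ⊤ μ0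
  unimodular : ∀ᵐ x ∂μ0, ‖θ x‖ = 1
  analytic : ∀ n : ℤ, n < 0 → fourierCoeff θ n = 0

/-- Pointwise complex conjugation of a function on the circle. -/
def conjFun (f : Tc → ℂ) : Tc → ℂ := fun x => (starRingEnd ℂ) (f x)

lemma memLp_conj {f : Tc → ℂ} {p : ℝ≥0∞} (hf : MemLp f p μ0) : MemLp (conjFun f) p μ0 := by
  refine ⟨continuous_star.comp_aestronglyMeasurable hf.1, ?_⟩
  have h : eLpNorm (conjFun f) p μ0 = eLpNorm f p μ0 :=
    eLpNorm_congr_norm_ae (Filter.Eventually.of_forall fun x => by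
      simp [conjFun])
  rw [h]
  exact hf.2

/-- Complex conjugation on `L²(𝕋)`. -/
def conjL2 (f : L2) : L2 := (memLp_conj (Lp.memLp f)).toLp (conjFun ⇑f)

end Paper
namespace Paper

/-- The set `w·U = {h ∈ L² : h = w·k (a.e.) for some k ∈ U}`, for a fixed function `w` on the
circle and a subspace `U ⊆ L²`; this is a (not necessarily closed) subspace of `L²`. -/
def mulSet (w : Tc → ℂ) (U : Submodule ℂ L2) : Submodule ℂ L2 where
  carrier := {h : L2 | ∃ k ∈ U, (⇑h : Tc → ℂ) =ᵐ[μ0] fun x => w x * (⇑k : Tc → ℂ) x}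
  add_mem' := by
    rintro a b ⟨k₁, hk₁, ha⟩ ⟨k₂, hk₂, hb⟩
    refine ⟨k₁ + k₂, U.add_mem hk₁ hk₂, ?_⟩
    filter_upwards [ha, hb, Lp.coeFn_add a b, Lp.coeFn_add k₁ k₂] with x h1 h2 h3 h4
    simp only [h3, Pi.add_apply, h1, h2, h4, mul_add]
  zero_mem' := by
    refine ⟨0, U.zero_mem, ?_⟩
    filter_upwards [Lp.coeFn_zero ℂ 2 μ0] with x h1
    simp [h1]
  smul_mem' := by
    rintro c a ⟨k, hk, ha⟩
    refine ⟨c • k, U.smul_mem c hk, ?_⟩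
    filter_upwards [ha, Lp.coeFn_smul c a, Lp.coeFn_smul c k] with x h1 h2 h3
    simp only [h2, Pi.smul_apply, h1, h3, smul_eq_mul]
    ring

/-- `f` is an outer function: `f ∈ H²` and the polynomial multiples of `f` are dense in `H²`
(i.e. `f` is cyclic for the forward shift). -/
def IsOuter (f : L2) : Prop :=
  f ∈ H2 ∧
    (Submodule.span ℂ (Set.range fun k : ℕ => ((mulLM zf) ^ k) f)).topologicalClosure = H2

/-- `h` is a cyclic vector for the backward shift `S*` on `H²`. -/
def CyclicSstar (h : L2) : Prop :=
  (Submodule.span ℂ (Set.range fun k : ℕ => (Sstar ^ k) h)).topologicalClosure = H2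

/-- `d` divides `u` in the sense of inner functions. -/
def InnerDvd (d u : Tc → ℂ) : Prop :=
  ∃ v : Tc → ℂ, IsInner v ∧ ∀ᵐ x ∂μ0, u x = d x * v x

/-- Two inner functions have greatest common inner divisor `1`, i.e. every common inner
divisor is a (necessarily unimodular) constant. -/
def CoprimeInner (u₁ u₂ : Tc → ℂ) : Prop :=
  ∀ d : Tc → ℂ, IsInner d → InnerDvd d u₁ → InnerDvd d u₂ → ∃ c : ℂ, ∀ᵐ x ∂μ0, d x = c

/-- The kernel of the truncated Toeplitz operator `A_g^θ = P_θ (g ·) : K_θ → K_θ`: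
`f ∈ ker A_g^θ` iff `f ∈ K_θ` and `g f ⊥ K_θ`. -/
def kerA (θ g : Tc → ℂ) : Submodule ℂ L2 :=
  Kmod θ ⊓ ((Kmod θ)ᗮ).comap (mulLM g)

/-- The kernel of the dual truncated Toeplitz operator `D_g^θ = Q (g ·) : K_θ^⊥ → K_θ^⊥`:
`f ∈ ker D_g^θ` iff `f ∈ K_θ^⊥` and `g f ⊥ K_θ^⊥`. -/
def kerD (θ g : Tc → ℂ) : Submodule ℂ L2 :=
  (Kmod θ)ᗮ ⊓ (((Kmod θ)ᗮ)ᗮ).comap (mulLM g)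

/-- The space `A = {f ∈ ker D_g^θ : gf ∈ K_θ ∩ zH²}`. -/
def dualA (θ g : Tc → ℂ) : Submodule ℂ L2 :=
  kerD θ g ⊓ (Kmod θ ⊓ coeffGE 1).comap (mulLM g)

/-- The space `C = ker D_g^θ ∩ (conj H²₀ ⊕ θzH²) ∩ A`. -/
def dualC (θ g : Tc → ℂ) : Submodule ℂ L2 :=
  kerD θ g ⊓ (coeffLT 0 ⊔ (coeffGE 1).map (mulLM θ)) ⊓ dualA θ g

end Paper
namespace Paper

/-- The vector-valued space `L²(𝕋, ℂⁿ)`, realised as an `ℓ²`-direct sum of `n` copies of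
`L²(𝕋)`; the subspace `H2v n` below is the vector-valued Hardy space `H²(𝔻, ℂⁿ)`. -/
abbrev Vec (n : ℕ) : Type := PiLp 2 (fun _ : Fin n => L2)

/-- The `i`-th component, as a linear map `L²(𝕋, ℂⁿ) → L²(𝕋)`. -/
def compLM {n : ℕ} (i : Fin n) : Vec n →ₗ[ℂ] L2 where
  toFun F := F i
  map_add' F G := rfl
  map_smul' c F := rfl

/-- Vector-valued analogue of `coeffGE`: `coeffGEv n 0 = H²(𝔻, ℂⁿ)` and
`coeffGEv n 1 = zH²(𝔻, ℂⁿ)`. -/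
def coeffGEv (n : ℕ) (k : ℤ) : Submodule ℂ (Vec n) :=
  ⨅ i : Fin n, (coeffGE k).comap (compLM i)

/-- The vector-valued Hardy space `H²(𝔻, ℂⁿ)`. -/
def H2v (n : ℕ) : Submodule ℂ (Vec n) := coeffGEv n 0

/-- The vector-valued model space `K_θ(𝔻, ℂⁿ)` (all components in `K_θ`). -/
def Kv (θ : Tc → ℂ) (n : ℕ) : Submodule ℂ (Vec n) :=
  ⨅ i : Fin n, (Kmod θ).comap (compLM i)

/-- Evaluation at the origin, `F ↦ F(0)`, for (Hardy-space) elements of `L²(𝕋, ℂⁿ)`. -/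
def ev0 {n : ℕ} (F : Vec n) : EuclideanSpace ℂ (Fin n) := WithLp.toLp 2 (fun i => cf (F i) 0)

/-- Evaluation at the origin as a linear map `H²(𝔻, ℂⁿ) → ℂⁿ`. -/
def ev0LM (n : ℕ) : Vec n →ₗ[ℂ] EuclideanSpace ℂ (Fin n) where
  toFun := ev0
  map_add' _F _G := by
    ext i
    simp [ev0, cf]
  map_smul' _c _F := by
    ext i
    simp [ev0, cf]

/-- The componentwise backward shift on `L²(𝕋, ℂⁿ)`. -/
def SstarV {n : ℕ} : Vec n →ₗ[ℂ] Vec n where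
  toFun F := WithLp.toLp 2 (fun i => Sstar (F i))
  map_add' _F _G := by
    ext i
    simp
  map_smul' _c _F := by
    ext i
    simp

/-- Componentwise multiplication by a scalar `L^∞` function on `L²(𝕋, ℂⁿ)`. -/
def mulVLM (g : Tc → ℂ) {n : ℕ} : Vec n →ₗ[ℂ] Vec n where
  toFun F := WithLp.toLp 2 (fun i => mulLM g (F i))
  map_add' _F _G := by
    ext i
    simp
  map_smul' _c _F := by
    ext i
    simp

/-- The projection onto the first `i` coordinates, `P_i : H²(𝔻, ℂⁿ) → H²(𝔻, ℂⁱ)`. -/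
def projLE {n i : ℕ} (h : i ≤ n) : Vec n →ₗ[ℂ] Vec i where
  toFun F := WithLp.toLp 2 (fun j => F (Fin.castLE h j))
  map_add' F G := rfl
  map_smul' c F := rfl

/-- The `i`-th row of a matrix symbol applied to a vector function:
`F ↦ ∑ j, G i j • F j`. -/
def rowLM {n : ℕ} (G : Matrix (Fin n) (Fin n) (Tc → ℂ)) (i : Fin n) : Vec n →ₗ[ℂ] L2 :=
  ∑ j : Fin n, (mulLM (G i j)).comp (compLM j)

/-- The kernel of the block Toeplitz operator `T_G = P₊(G ·)` on `H²(𝔻, ℂⁿ)`: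
`F ∈ ker T_G` iff `F ∈ H²(𝔻, ℂⁿ)` and every component of `GF` is orthogonal to `H²`. -/
def kerT {n : ℕ} (G : Matrix (Fin n) (Fin n) (Tc → ℂ)) : Submodule ℂ (Vec n) :=
  H2v n ⊓ ⨅ i : Fin n, (H2ᗮ).comap (rowLM G i)

/-- The kernel of the matrix truncated Toeplitz operator `A_G^θ = P_θ(G ·)` on `K_θ(𝔻, ℂ²)`. -/
def kerAv (θ : Tc → ℂ) (G : Matrix (Fin 2) (Fin 2) (Tc → ℂ)) : Submodule ℂ (Vec 2) :=
  Kv θ 2 ⊓ ⨅ i : Fin 2, ((Kmod θ)ᗮ).comap (rowLM G i)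

/-- The scalar-type space `w·U ⊆ L²(𝕋, ℂⁿ)`, for a fixed vector function `w` and a
subspace `U ⊆ L²(𝕋)` of scalar functions. -/
def vecMulSet {n : ℕ} (w : Vec n) (U : Submodule ℂ L2) : Submodule ℂ (Vec n) where
  carrier := {F | ∃ k ∈ U, ∀ i : Fin n,
    (⇑(F i) : Tc → ℂ) =ᵐ[μ0] fun x => (⇑(w i) : Tc → ℂ) x * (⇑k : Tc → ℂ) x}
  add_mem' := by
    rintro a b ⟨k₁, hk₁, ha⟩ ⟨k₂, hk₂, hb⟩
    refine ⟨k₁ + k₂, U.add_mem hk₁ hk₂, fun i => ?_⟩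
    have hab : (a + b) i = a i + b i := rfl
    rw [hab]
    filter_upwards [ha i, hb i, Lp.coeFn_add (a i) (b i), Lp.coeFn_add k₁ k₂]
      with x h1 h2 h3 h4
    simp only [h3, Pi.add_apply, h1, h2, h4, mul_add]
  zero_mem' := by
    refine ⟨0, U.zero_mem, fun i => ?_⟩
    have h0 : (0 : Vec n) i = 0 := rfl
    rw [h0]
    filter_upwards [Lp.coeFn_zero ℂ 2 μ0] with x h1
    simp [h1]
  smul_mem' := by
    rintro c a ⟨k, hk, ha⟩
    refine ⟨c • k, U.smul_mem c hk, fun i => ?_⟩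
    have hc : (c • a) i = c • (a i) := rfl
    rw [hc]
    filter_upwards [ha i, Lp.coeFn_smul c (a i), Lp.coeFn_smul c k] with x h1 h2 h3
    simp only [h2, Pi.smul_apply, h1, h3, smul_eq_mul]
    ring

end Paper
namespace Paper

/-- The representation `F = F₀ k₀ + z ∑ⱼ kⱼ eⱼ` of Theorem 3.4(1): here the columns of `F₀`
are `W 0, …, W (r-1)`, the `eⱼ` are an orthonormal basis of the defect space, and the
parameter `k = (k₀, k₁, …, k_m)` runs through a subspace of `H²(𝔻, ℂ^{r+m})`. -/
def rep1 {n r m : ℕ} (W : Fin r → Vec n) (e : Fin m → Vec n) (k : Vec (r + m)) (F : Vec n) :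
    Prop :=
  ∀ i : Fin n,
    (⇑(F i) : Tc → ℂ) =ᵐ[μ0] fun x =>
      (∑ j : Fin r, (⇑(k (Fin.castAdd m j)) : Tc → ℂ) x * (⇑(W j i) : Tc → ℂ) x) +
        zf x * ∑ j : Fin m, (⇑(k (Fin.natAdd r j)) : Tc → ℂ) x * (⇑(e j i) : Tc → ℂ) x

/-- The representation `F = z ∑ⱼ kⱼ eⱼ` of Theorem 3.4(2). -/
def rep2 {n m : ℕ} (e : Fin m → Vec n) (k : Vec m) (F : Vec n) : Prop :=
  ∀ i : Fin n,
    (⇑(F i) : Tc → ℂ) =ᵐ[μ0] fun x =>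
      zf x * ∑ j : Fin m, (⇑(k j) : Tc → ℂ) x * (⇑(e j i) : Tc → ℂ) x

end Paper

/-!
Let `f₀ ∈ ker A_g^θ` have nonzero `n`-th Taylor coefficient and let `f ∈ ker A_g^θ ∩ z^{n+1}H²`.
For `w ∈ K_θ ∩ zⁿH²` the twisted conjugate `C w = θ zⁿ w̄` satisfies `C w - conj (ŵ(n)) θ ∈ K_θ`,
and `⟪C a, g b⟫ = ∫ θ̄ z̄ⁿ a g b` is symmetric in `a` and `b`. Testing `g f` against
`C f₀ - conj (f̂₀(n)) θ` and `g f₀` against `C f ∈ K_θ` thus gives `f̂₀(n) ⟪θ, g f⟫ = 0`.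
Since `z k - ⟪θ, z k⟫ θ ∈ K_θ` for every `k ∈ K_θ`, the orthogonality `g f ⊥ θ` is exactly what
puts `z̄ f` back into `ker A_g^θ`; for `f = zⁿ h` with `h(0) = 0` this says `zⁿ S* h ∈ ker A_g^θ`.
-/

namespace Paper

open scoped InnerProductSpace

lemma cf_eq_inner (f : L2) (m : ℤ) : cf f m = ⟪fourierLp 2 m, f⟫_ℂ := by
  rw [← coe_fourierBasis, ← fourierBasis.repr_apply_apply]
  rfl

lemma cf_eq_fourierCoeff (f : L2) (m : ℤ) : cf f m = fourierCoeff (⇑f) m := by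
  rw [← fourierBasis_repr]
  rfl

lemma eq_of_cf_eq {x y : L2} (h : ∀ m, cf x m = cf y m) : x = y :=
  fourierBasis.repr.injective (lp.ext (funext h))

lemma cf_fourierLp (j m : ℤ) : cf (fourierLp 2 j) m = if m = j then 1 else 0 := by
  classical
  rw [cf_eq_inner, ← coe_fourierBasis, ← fourierBasis.repr_apply_apply, fourierBasis.repr_self,
    lp.single_apply, Pi.single_apply]

lemma cf_sub (x y : L2) (m : ℤ) : cf (x - y) m = cf x m - cf y m :=
  map_sub (coeffCLM m) x y

lemma cf_smul (c : ℂ) (x : L2) (m : ℤ) : cf (c • x) m = c * cf x m :=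
  map_smul (coeffCLM m) c x

lemma inner_eq_integral (x y : L2) : ⟪x, y⟫_ℂ = ∫ a, conj (x a) * y a ∂μ0 := by
  rw [MeasureTheory.L2.inner_def]
  refine integral_congr_ae (Filter.Eventually.of_forall fun a => ?_)
  simp [RCLike.inner_apply, mul_comm]

lemma inner_eq_tsum_cf (x y : L2) : ⟪x, y⟫_ℂ = ∑' m : ℤ, conj (cf x m) * cf y m := by
  rw [← fourierBasis.tsum_inner_mul_inner x y]
  congr 1
  funext m
  rw [cf_eq_inner, cf_eq_inner, coe_fourierBasis, inner_conj_symm]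

lemma coeFn_mulLM {g : Tc → ℂ} (hg : MemLp g ⊤ μ0) (f : L2) :
    ⇑(mulLM g f) =ᵐ[μ0] fun x => g x * f x := by
  rw [mulLM, dif_pos hg]
  exact MemLp.coeFn_toLp ((Lp.memLp f).smul (r := 2) hg)

lemma coeFn_conjL2 (f : L2) : ⇑(conjL2 f) =ᵐ[μ0] fun x => conj (f x) :=
  MemLp.coeFn_toLp _

lemma coeFn_pow_mulLM_zf (n : ℕ) (f : L2) :
    ⇑((mulLM zf ^ n) f) =ᵐ[μ0] fun x => fourier (n : ℤ) x * f x := by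
  induction n generalizing f with
  | zero => exact Filter.Eventually.of_forall fun x => by simp
  | succ n ih =>
    rw [pow_succ, Module.End.mul_apply]
    filter_upwards [ih (mulLM zf f), coeFn_mulLM memLp_zf f] with x hx1 hx2
    rw [hx1, hx2, Nat.cast_succ, fourier_add, zf, mul_assoc]

lemma cf_of_ae_eq_fourier_mul {F f : L2} {j : ℤ} (h : ⇑F =ᵐ[μ0] fun x => fourier j x * f x)
    (m : ℤ) : cf F m = cf f (m - j) := by
  rw [cf_eq_fourierCoeff, cf_eq_fourierCoeff, fourierCoeff, fourierCoeff]
  refine integral_congr_ae ?_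
  filter_upwards [h] with x hx
  rw [hx, smul_eq_mul, smul_eq_mul, ← mul_assoc, ← fourier_add, neg_sub, sub_eq_neg_add]

lemma cf_pow_mulLM_zf (n : ℕ) (f : L2) (m : ℤ) : cf ((mulLM zf ^ n) f) m = cf f (m - n) :=
  cf_of_ae_eq_fourier_mul (coeFn_pow_mulLM_zf n f) m

lemma cf_mulLM_zf (f : L2) (m : ℤ) : cf (mulLM zf f) m = cf f (m - 1) :=
  cf_of_ae_eq_fourier_mul (coeFn_mulLM memLp_zf f) m

lemma cf_mulLM_zbar (f : L2) (m : ℤ) : cf (mulLM zbar f) m = cf f (m + 1) := by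
  rw [cf_of_ae_eq_fourier_mul (coeFn_mulLM memLp_zbar f) m, sub_neg_eq_add]

lemma cf_conjL2 (f : L2) (m : ℤ) : cf (conjL2 f) m = conj (cf f (-m)) := by
  rw [cf_eq_fourierCoeff, cf_eq_fourierCoeff, fourierCoeff, fourierCoeff, ← integral_conj]
  refine integral_congr_ae ?_
  filter_upwards [coeFn_conjL2 f] with x hx
  rw [hx, smul_eq_mul, smul_eq_mul, map_mul, neg_neg, ← fourier_neg]

lemma coeffGE_antitone : Antitone coeffGE := fun _ _ hkl _ hf =>
  mem_coeffGE.2 fun m hm => mem_coeffGE.1 hf m (hm.trans_le hkl)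

lemma mem_coeffGE_add_one {f : L2} {k : ℤ} :
    f ∈ coeffGE (k + 1) ↔ f ∈ coeffGE k ∧ cf f k = 0 := by
  simp only [mem_coeffGE, Int.lt_add_one_iff, le_iff_lt_or_eq, or_imp, forall_and,
    forall_eq]

lemma pow_mulLM_zf_mem_coeffGE_iff (n : ℕ) {f : L2} {k : ℤ} :
    (mulLM zf ^ n) f ∈ coeffGE (n + k) ↔ f ∈ coeffGE k := by
  simp only [mem_coeffGE, cf_pow_mulLM_zf]
  exact ⟨fun h m hm => by simpa using h (m + n) (by omega),
    fun h m hm => h (m - n) (by omega)⟩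

lemma mem_coeffGE_one_iff {f : L2} : f ∈ coeffGE 1 ↔ f ∈ H2 ∧ cf f 0 = 0 :=
  mem_coeffGE_add_one (k := 0)

lemma mulLM_zf_mem_H2 {f : L2} (hf : f ∈ H2) : mulLM zf f ∈ H2 :=
  mem_coeffGE.2 fun m hm => by
    rw [cf_mulLM_zf]
    exact mem_coeffGE.1 hf (m - 1) (by omega)

lemma mulLM_zbar_mem_H2 {f : L2} (hf : f ∈ coeffGE 1) : mulLM zbar f ∈ H2 :=
  mem_coeffGE.2 fun m hm => by
    rw [cf_mulLM_zbar]
    exact mem_coeffGE.1 hf (m + 1) (by omega)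

lemma mulLM_zf_mulLM_zbar (f : L2) : mulLM zf (mulLM zbar f) = f :=
  eq_of_cf_eq fun m => by rw [cf_mulLM_zf, cf_mulLM_zbar, sub_add_cancel]

lemma pow_mulLM_zf_mulLM_zbar (n : ℕ) (f : L2) :
    (mulLM zf ^ n) (mulLM zbar f) = mulLM zbar ((mulLM zf ^ n) f) :=
  eq_of_cf_eq fun m => by rw [cf_pow_mulLM_zf, cf_mulLM_zbar, cf_mulLM_zbar, cf_pow_mulLM_zf,
    sub_add_eq_add_sub]

lemma fourierLp_mem_H2 {j : ℤ} (hj : 0 ≤ j) : fourierLp 2 j ∈ H2 :=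
  mem_coeffGE.2 fun m hm => by rw [cf_fourierLp, if_neg (by omega)]

lemma Sstar_eq_mulLM_zbar {f : L2} (hf : f ∈ coeffGE 1) : Sstar f = mulLM zbar f := by
  have : CompleteSpace H2 := (isClosed_coeffGE 0).completeSpace_coe
  exact H2.starProjection_eq_self_iff.2 (mulLM_zbar_mem_H2 hf)

lemma mulLM_comm {a b : Tc → ℂ} (ha : MemLp a ⊤ μ0) (hb : MemLp b ⊤ μ0) (f : L2) :
    mulLM a (mulLM b f) = mulLM b (mulLM a f) := by
  apply Lp.ext
  filter_upwards [coeFn_mulLM ha (mulLM b f), coeFn_mulLM hb f, coeFn_mulLM hb (mulLM a f),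
    coeFn_mulLM ha f] with x h1 h2 h3 h4
  rw [h1, h2, h3, h4, mul_left_comm]

lemma inner_mulLM_mulLM_of_norm_eq_one {a : Tc → ℂ} (ha : MemLp a ⊤ μ0)
    (ha1 : ∀ᵐ x ∂μ0, ‖a x‖ = 1) (u v : L2) : ⟪mulLM a u, mulLM a v⟫_ℂ = ⟪u, v⟫_ℂ := by
  rw [inner_eq_integral, inner_eq_integral]
  refine integral_congr_ae ?_
  filter_upwards [coeFn_mulLM ha u, coeFn_mulLM ha v, ha1] with x hu hv hx
  have hnorm : conj (a x) * a x = 1 := by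
    rw [← Complex.normSq_eq_conj_mul_self, Complex.normSq_eq_norm_sq, hx]
    norm_num
  rw [hu, hv, map_mul]
  linear_combination (conj (u x) * v x) * hnorm

lemma norm_zf (x : Tc) : ‖zf x‖ = 1 := Circle.norm_coe _

lemma inner_mulLM_zbar_right (u f : L2) : ⟪u, mulLM zbar f⟫_ℂ = ⟪mulLM zf u, f⟫_ℂ := by
  rw [inner_eq_integral, inner_eq_integral]
  refine integral_congr_ae ?_
  filter_upwards [coeFn_mulLM memLp_zbar f, coeFn_mulLM memLp_zf u] with x hf hu
  rw [hf, hu, map_mul, zbar, zf, fourier_neg]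
  ring

lemma IsInner.mulLM_one_mem_H2 {θ : Tc → ℂ} (hθ : IsInner θ) : mulLM θ (fourierLp 2 0) ∈ H2 := by
  have hθ1 : ⇑(mulLM θ (fourierLp 2 0)) =ᵐ[μ0] θ := by
    filter_upwards [coeFn_mulLM hθ.memLinf (fourierLp 2 0), coeFn_fourierLp 2 0] with x h1 h2
    rw [h1, h2, fourier_zero, mul_one]
  refine mem_coeffGE.2 fun m hm => ?_
  rw [cf_eq_fourierCoeff, fourierCoeff_congr_ae hθ1]
  exact hθ.analytic m hm

lemma IsInner.inner_mulLM_mulLM_one {θ : Tc → ℂ} (hθ : IsInner θ) (u : L2) :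
    ⟪mulLM θ u, mulLM θ (fourierLp 2 0)⟫_ℂ = conj (cf u 0) := by
  rw [inner_mulLM_mulLM_of_norm_eq_one hθ.memLinf hθ.unimodular, cf_eq_inner, inner_conj_symm]

lemma mem_Kmod_iff {θ : Tc → ℂ} {f : L2} :
    f ∈ Kmod θ ↔ f ∈ H2 ∧ ∀ u ∈ H2, ⟪mulLM θ u, f⟫_ℂ = 0 := by
  rw [Kmod, Submodule.mem_inf, thetaH2, Submodule.mem_orthogonal]
  simp only [Submodule.mem_map, forall_exists_index, and_imp, forall_apply_eq_imp_iff₂]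

lemma mem_kerA_iff {θ g : Tc → ℂ} {f : L2} :
    f ∈ kerA θ g ↔ f ∈ Kmod θ ∧ ∀ k ∈ Kmod θ, ⟪k, mulLM g f⟫_ℂ = 0 := by
  rw [kerA, Submodule.mem_inf, Submodule.mem_comap, Submodule.mem_orthogonal]

lemma mulLM_zbar_mem_Kmod {θ : Tc → ℂ} (hθ : MemLp θ ⊤ μ0) {f : L2} (hf : f ∈ Kmod θ)
    (hf1 : f ∈ coeffGE 1) : mulLM zbar f ∈ Kmod θ := by
  refine mem_Kmod_iff.2 ⟨mulLM_zbar_mem_H2 hf1, fun u hu => ?_⟩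
  rw [inner_mulLM_zbar_right, mulLM_comm memLp_zf hθ]
  exact (mem_Kmod_iff.1 hf).2 _ (mulLM_zf_mem_H2 hu)

lemma inner_mulLM_mulLM_zf_eq_zero {θ : Tc → ℂ} (hθ : IsInner θ) {u k : L2}
    (hu : u ∈ coeffGE 1) (hk : k ∈ Kmod θ) : ⟪mulLM θ u, mulLM zf k⟫_ℂ = 0 := by
  rw [← mulLM_zf_mulLM_zbar u, mulLM_comm hθ.memLinf memLp_zf,
    inner_mulLM_mulLM_of_norm_eq_one memLp_zf (Filter.Eventually.of_forall norm_zf)]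
  exact (mem_Kmod_iff.1 hk).2 _ (mulLM_zbar_mem_H2 hu)

lemma mulLM_zf_sub_mem_Kmod {θ : Tc → ℂ} (hθ : IsInner θ) {k : L2} (hk : k ∈ Kmod θ) :
    mulLM zf k - ⟪mulLM θ (fourierLp 2 0), mulLM zf k⟫_ℂ • mulLM θ (fourierLp 2 0) ∈ Kmod θ := by
  have hzk : mulLM zf k ∈ H2 := mulLM_zf_mem_H2 (mem_Kmod_iff.1 hk).1
  refine mem_Kmod_iff.2 ⟨H2.sub_mem hzk (H2.smul_mem _ hθ.mulLM_one_mem_H2), fun u hu => ?_⟩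
  have hu1 : u - cf u 0 • fourierLp 2 0 ∈ coeffGE 1 := by
    refine mem_coeffGE_one_iff.2 ⟨H2.sub_mem hu (H2.smul_mem _ (fourierLp_mem_H2 le_rfl)), ?_⟩
    rw [cf_sub, cf_smul, cf_fourierLp, if_pos rfl, mul_one, sub_self]
  have hθu : mulLM θ u
      = mulLM θ (u - cf u 0 • fourierLp 2 0) + cf u 0 • mulLM θ (fourierLp 2 0) := by
    rw [← map_smul (mulLM θ), ← map_add, sub_add_cancel]
  rw [inner_sub_right, inner_smul_right, hθ.inner_mulLM_mulLM_one, hθu, inner_add_left,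
    inner_smul_left, inner_mulLM_mulLM_zf_eq_zero hθ hu1 hk]
  ring

def twistedConj (θ : Tc → ℂ) (n : ℕ) (f : L2) : L2 := mulLM θ ((mulLM zf ^ n) (conjL2 f))

lemma coeFn_twistedConj {θ : Tc → ℂ} (hθ : MemLp θ ⊤ μ0) (n : ℕ) (f : L2) :
    ⇑(twistedConj θ n f) =ᵐ[μ0] fun x => θ x * fourier (n : ℤ) x * conj (f x) := by
  unfold twistedConj
  filter_upwards [coeFn_mulLM hθ ((mulLM zf ^ n) (conjL2 f)),
    coeFn_pow_mulLM_zf n (conjL2 f), coeFn_conjL2 f] with x h1 h2 h3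
  rw [h1, h2, h3, mul_assoc]

lemma inner_twistedConj_mulLM_comm {θ g : Tc → ℂ} (hθ : MemLp θ ⊤ μ0) (hg : MemLp g ⊤ μ0)
    (n : ℕ) (a b : L2) :
    ⟪twistedConj θ n a, mulLM g b⟫_ℂ = ⟪twistedConj θ n b, mulLM g a⟫_ℂ := by
  rw [inner_eq_integral, inner_eq_integral]
  refine integral_congr_ae ?_
  filter_upwards [coeFn_twistedConj hθ n a, coeFn_twistedConj hθ n b, coeFn_mulLM hg a,
    coeFn_mulLM hg b] with x h1 h2 h3 h4
  rw [h1, h2, h3, h4]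
  simp only [map_mul, Complex.conj_conj]
  ring

lemma inner_fourierLp_twistedConj {θ : Tc → ℂ} (hθ : MemLp θ ⊤ μ0) (n : ℕ) (w : L2) (m : ℤ) :
    ⟪fourierLp 2 m, twistedConj θ n w⟫_ℂ = ⟪w, mulLM θ (fourierLp 2 (n - m))⟫_ℂ := by
  rw [inner_eq_integral, inner_eq_integral]
  refine integral_congr_ae ?_
  filter_upwards [coeFn_fourierLp 2 m, coeFn_twistedConj hθ n w,
    coeFn_mulLM hθ (fourierLp 2 (n - m)), coeFn_fourierLp 2 (n - m)] with x h1 h2 h3 h4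
  rw [h1, h2, h3, h4, sub_eq_add_neg, fourier_add, fourier_neg]
  ring

lemma twistedConj_mem_H2 {θ : Tc → ℂ} (hθ : MemLp θ ⊤ μ0) (n : ℕ) {w : L2}
    (hw : w ∈ (thetaH2 θ)ᗮ) : twistedConj θ n w ∈ H2 :=
  mem_coeffGE.2 fun m hm => by
    rw [cf_eq_inner, inner_fourierLp_twistedConj hθ]
    exact (Submodule.mem_orthogonal' _ _).1 hw _ ⟨_, fourierLp_mem_H2 (by omega), rfl⟩

lemma inner_mulLM_twistedConj {θ : Tc → ℂ} (hθ : IsInner θ) {n : ℕ} {u w : L2} (hu : u ∈ H2)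
    (hw : w ∈ coeffGE n) : ⟪mulLM θ u, twistedConj θ n w⟫_ℂ = conj (cf u 0 * cf w n) := by
  rw [twistedConj, inner_mulLM_mulLM_of_norm_eq_one hθ.memLinf hθ.unimodular, inner_eq_tsum_cf,
    tsum_eq_single 0]
  · rw [cf_pow_mulLM_zf, cf_conjL2, map_mul, zero_sub, neg_neg]
  · intro m hm
    rw [cf_pow_mulLM_zf, cf_conjL2]
    rcases lt_or_gt_of_ne hm with h | h
    · rw [mem_coeffGE.1 hu m h, map_zero, zero_mul]
    · rw [mem_coeffGE.1 hw (-(m - n)) (by omega), map_zero, mul_zero]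

lemma twistedConj_sub_mem_Kmod {θ : Tc → ℂ} (hθ : IsInner θ) {n : ℕ} {w : L2}
    (hw : w ∈ Kmod θ) (hwn : w ∈ coeffGE n) :
    twistedConj θ n w - conj (cf w n) • mulLM θ (fourierLp 2 0) ∈ Kmod θ := by
  refine mem_Kmod_iff.2 ⟨H2.sub_mem (twistedConj_mem_H2 hθ.memLinf n hw.2)
    (H2.smul_mem _ hθ.mulLM_one_mem_H2), fun u hu => ?_⟩
  rw [inner_sub_right, inner_smul_right, inner_mulLM_twistedConj hθ hu hwn,
    hθ.inner_mulLM_mulLM_one, map_mul]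
  ring

lemma inner_mulLM_one_mulLM_eq_zero {θ g : Tc → ℂ} (hθ : IsInner θ) (hg : MemLp g ⊤ μ0)
    {n : ℕ} {f f₀ : L2} (hf : f ∈ kerA θ g) (hfn : f ∈ coeffGE (n + 1)) (hf₀ : f₀ ∈ kerA θ g)
    (hf₀n : f₀ ∈ coeffGE n) (hcoeff : cf f₀ n ≠ 0) :
    ⟪mulLM θ (fourierLp 2 0), mulLM g f⟫_ℂ = 0 := by
  obtain ⟨hfK, hfO⟩ := mem_kerA_iff.1 hf
  obtain ⟨hf₀K, hf₀O⟩ := mem_kerA_iff.1 hf₀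
  obtain ⟨hfn, hfn0⟩ := mem_coeffGE_add_one.1 hfn
  have hCf : twistedConj θ n f ∈ Kmod θ := by
    simpa [hfn0] using twistedConj_sub_mem_Kmod hθ hfK hfn
  have h := hfO _ (twistedConj_sub_mem_Kmod hθ hf₀K hf₀n)
  rw [inner_sub_left, inner_smul_left, Complex.conj_conj,
    inner_twistedConj_mulLM_comm hθ.memLinf hg, hf₀O _ hCf, zero_sub, neg_eq_zero] at h
  exact (mul_eq_zero.1 h).resolve_left hcoeff

lemma mulLM_zbar_mem_kerA {θ g : Tc → ℂ} (hθ : IsInner θ) (hg : MemLp g ⊤ μ0) {f : L2}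
    (hf : f ∈ kerA θ g) (hf1 : f ∈ coeffGE 1)
    (hθf : ⟪mulLM θ (fourierLp 2 0), mulLM g f⟫_ℂ = 0) : mulLM zbar f ∈ kerA θ g := by
  obtain ⟨hfK, hfO⟩ := mem_kerA_iff.1 hf
  refine mem_kerA_iff.2 ⟨mulLM_zbar_mem_Kmod hθ.memLinf hfK hf1, fun k hk => ?_⟩
  have h := hfO _ (mulLM_zf_sub_mem_Kmod hθ hk)
  rw [inner_sub_left, inner_smul_left, hθf, mul_zero, sub_zero] at h
  rw [mulLM_comm hg memLp_zbar, inner_mulLM_zbar_right, h]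

theorem kernel_divided_by_power_of_z_nearly_invariant_general
    (θ g : Tc → ℂ) (hθ : IsInner θ) (hg : MemLp g ⊤ μ0)
    (n : ℕ)
    (hle : kerA θ g ≤ coeffGE (n : ℤ))
    (hgreatest : ¬ kerA θ g ≤ coeffGE ((n : ℤ) + 1)) :
    (kerA θ g).comap ((mulLM zf) ^ n) ≤ H2 ∧
      ∀ h ∈ (kerA θ g).comap ((mulLM zf) ^ n), cf h 0 = 0 →
        Sstar h ∈ (kerA θ g).comap ((mulLM zf) ^ n) := by
  obtain ⟨f₀, hf₀, hf₀n⟩ : ∃ f₀ ∈ kerA θ g, cf f₀ n ≠ 0 := by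
    obtain ⟨f₀, hf₀, hnot⟩ := SetLike.not_le_iff_exists.1 hgreatest
    exact ⟨f₀, hf₀, fun h0 => hnot (mem_coeffGE_add_one.2 ⟨hle hf₀, h0⟩)⟩
  have hH2 : (kerA θ g).comap ((mulLM zf) ^ n) ≤ H2 := fun h hh =>
    (pow_mulLM_zf_mem_coeffGE_iff n).1 (by rw [add_zero]; exact hle hh)
  refine ⟨hH2, fun h hh h0 => ?_⟩
  have h1 : h ∈ coeffGE 1 := mem_coeffGE_one_iff.2 ⟨hH2 hh, h0⟩
  have hF : (mulLM zf ^ n) h ∈ coeffGE (n + 1) := (pow_mulLM_zf_mem_coeffGE_iff n).2 h1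
  rw [Submodule.mem_comap, Sstar_eq_mulLM_zbar h1, pow_mulLM_zf_mulLM_zbar]
  exact mulLM_zbar_mem_kerA hθ hg hh (coeffGE_antitone (by omega) hF)
    (inner_mulLM_one_mulLM_eq_zero hθ hg hh hF hf₀ (hle hf₀) hf₀n)

/-- **Theorem 4.2.**  If `n` is the greatest natural number with
`ker A_g^θ ⊆ zⁿH²`, then `ker A_g^θ / zⁿ` is a nearly `S*`-invariant subspace of `H²`. -/
theorem kernel_divided_by_power_of_z_nearly_invariant
    (θ g : Tc → ℂ) (hθ : IsInner θ) (hg : MemLp g ⊤ μ0)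
    (hker : kerA θ g ≠ ⊥)
    (n : ℕ)
    (hle : kerA θ g ≤ coeffGE (n : ℤ))
    (hgreatest : ¬ kerA θ g ≤ coeffGE ((n : ℤ) + 1)) :
    (kerA θ g).comap ((mulLM zf) ^ n) ≤ H2 ∧
      ∀ h ∈ (kerA θ g).comap ((mulLM zf) ^ n), cf h 0 = 0 →
        Sstar h ∈ (kerA θ g).comap ((mulLM zf) ^ n) :=
  kernel_divided_by_power_of_z_nearly_invariant_general θ g hθ hg n hle hgreatest

end Paper
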